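/- Let H be a complex Hilbert space with a unitary 𝔎 satisfying 𝔎³ = Id and let ℱ : H × H → ℂ² be a sesquilinear form satisfying ℱ(𝔎Ψ, 𝔎Φ) = R ℱ(Ψ, Φ), where R is the 2π/3-rotation matrix with eigenvalues τ, τ̄ and eigenvectors (1, i)ᵀ, (1, -i)ᵀ. If Ψⱼ ∈ H_j and Ψₖ ∈ H_k for j, k ∈ {1, τ, τ̄}, then: ℱ(Ψⱼ, Ψₖ) = 0 when j = k; ℱ(Ψⱼ, Ψₖ) is a scalar multiple of (1, i)ᵀ when (j,k) ∈ {(1,τ), (τ,τ̄), (τ̄,1)}; and ℱ(Ψⱼ, Ψₖ) is a scalar multiple of (1, -i)ᵀ when (j,k) ∈ {(τ,1), (τ̄,τ), (1,τ̄)}. -/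

import Mathlib

open Matrix

/-- The clockwise `2π/3`-rotation matrix over `ℂ`. -/
noncomputable def Rc : Matrix (Fin 2) (Fin 2) ℂ :=
  !![-1/2, ((Real.sqrt 3 : ℝ) : ℂ)/2; -((Real.sqrt 3 : ℝ) : ℂ)/2, -1/2]

/-- `τ = e^{2πi/3}`. -/
noncomputable def τ : ℂ := Complex.exp (2 * Real.pi * Complex.I / 3)

/-- `τ̄ = e^{-2πi/3}`. -/
noncomputable def τb : ℂ := (starRingEnd ℂ) τ

/-!
Writing `𝔎Ψⱼ = jΨⱼ` and `𝔎Ψₖ = kΨₖ`, sesquilinearity turns the equivariance of `ℱ` into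
`R ℱ(Ψⱼ, Ψₖ) = (j̄ k) ℱ(Ψⱼ, Ψₖ)`. For `j, k ∈ {1, τ, τ̄}` the scalar `j̄ k` is `1` when `j = k`,
which is not an eigenvalue of `R`, so `ℱ(Ψⱼ, Ψₖ) = 0`; otherwise it is `τ` or `τ̄`, and
`ℱ(Ψⱼ, Ψₖ)` lies on the corresponding eigenline `ℂ (1, i)ᵀ` or `ℂ (1, -i)ᵀ` of `R`.
-/

lemma τ_eq : τ = -1/2 + ((Real.sqrt 3 : ℝ) : ℂ) / 2 * Complex.I := by
  have hθ : 2 * Real.pi * Complex.I / 3 = ((Real.pi - Real.pi / 3 : ℝ) : ℂ) * Complex.I := by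
    push_cast; ring
  rw [τ, hθ, Complex.exp_mul_I, ← Complex.ofReal_cos, ← Complex.ofReal_sin, Real.cos_pi_sub,
    Real.sin_pi_sub, Real.cos_pi_div_three, Real.sin_pi_div_three]
  push_cast; ring

lemma τb_eq : τb = -1/2 - ((Real.sqrt 3 : ℝ) : ℂ) / 2 * Complex.I := by
  rw [τb, τ_eq]
  simp only [map_add, map_div₀, map_mul, map_neg, map_one, map_ofNat, Complex.conj_ofReal,
    Complex.conj_I]
  ring

lemma ofReal_sqrt_three_sq : ((Real.sqrt 3 : ℝ) : ℂ) ^ 2 = 3 := by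
  rw [← Complex.ofReal_pow, Real.sq_sqrt (by norm_num)]
  norm_num

lemma ofReal_sqrt_three_ne_zero : ((Real.sqrt 3 : ℝ) : ℂ) ≠ 0 := by
  simp

lemma conj_τ : (starRingEnd ℂ) τ = τb := rfl

lemma conj_τb : (starRingEnd ℂ) τb = τ := Complex.conj_conj τ

lemma τ_mul_τb : τ * τb = 1 := by
  rw [τ_eq, τb_eq]
  linear_combination (-Complex.I ^ 2 / 4) * ofReal_sqrt_three_sq - 3 / 4 * Complex.I_sq

lemma τb_mul_τ : τb * τ = 1 := by
  rw [mul_comm, τ_mul_τb]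

lemma τ_mul_τ : τ * τ = τb := by
  rw [τ_eq, τb_eq]
  linear_combination (Complex.I ^ 2 / 4) * ofReal_sqrt_three_sq + 3 / 4 * Complex.I_sq

lemma τb_mul_τb : τb * τb = τ := by
  rw [τ_eq, τb_eq]
  linear_combination (Complex.I ^ 2 / 4) * ofReal_sqrt_three_sq + 3 / 4 * Complex.I_sq

lemma conj_mul_self_of_mem {j : ℂ} (hj : j ∈ ({1, τ, τb} : Set ℂ)) :
    (starRingEnd ℂ) j * j = 1 := by
  rcases hj with rfl | rfl | rfl
  · simp
  · rw [conj_τ, τb_mul_τ]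
  · rw [conj_τb, τ_mul_τb]

lemma mulVec_Rc_zero (v : Fin 2 → ℂ) :
    (Rc *ᵥ v) 0 = -v 0 / 2 + (Real.sqrt 3 : ℂ) / 2 * v 1 := by
  simp only [mulVec, dotProduct, Rc, of_apply, cons_val', cons_val_fin_one, cons_val_zero,
    cons_val_one, Fin.sum_univ_two]
  ring

lemma mulVec_Rc_one (v : Fin 2 → ℂ) :
    (Rc *ᵥ v) 1 = -(Real.sqrt 3 : ℂ) / 2 * v 0 - v 1 / 2 := by
  simp only [mulVec, dotProduct, Rc, of_apply, cons_val', cons_val_fin_one, cons_val_zero,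
    cons_val_one, Fin.sum_univ_two]
  ring

lemma eq_zero_of_mulVec_Rc_eq_self {v : Fin 2 → ℂ} (h : Rc *ᵥ v = v) : v = 0 := by
  have h0 := congrFun h 0
  have h1 := congrFun h 1
  rw [mulVec_Rc_zero] at h0
  rw [mulVec_Rc_one] at h1
  have hv1 : v 1 = 0 := by
    linear_combination (Real.sqrt 3 : ℂ) / 6 * h0 - 1 / 2 * h1 - v 1 / 12 * ofReal_sqrt_three_sq
  have hv0 : v 0 = 0 := by
    linear_combination -2 / 3 * h0 + (Real.sqrt 3 : ℂ) / 3 * hv1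
  ext i
  fin_cases i <;> simp [hv0, hv1]

lemma exists_smul_of_mulVec_Rc_eq_τ_smul {v : Fin 2 → ℂ} (h : Rc *ᵥ v = τ • v) :
    ∃ c : ℂ, v = c • ![1, Complex.I] := by
  have h0 := congrFun h 0
  rw [mulVec_Rc_zero, Pi.smul_apply, smul_eq_mul, τ_eq] at h0
  have hv1 : v 1 = Complex.I * v 0 := by
    refine sub_eq_zero.mp ((mul_eq_zero.mp ?_).resolve_left ofReal_sqrt_three_ne_zero)
    linear_combination 2 * h0
  refine ⟨v 0, ?_⟩
  ext i
  fin_cases i <;> simp [hv1, mul_comm]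

lemma exists_smul_of_mulVec_Rc_eq_τb_smul {v : Fin 2 → ℂ} (h : Rc *ᵥ v = τb • v) :
    ∃ c : ℂ, v = c • ![1, -Complex.I] := by
  have h0 := congrFun h 0
  rw [mulVec_Rc_zero, Pi.smul_apply, smul_eq_mul, τb_eq] at h0
  have hv1 : v 1 = -Complex.I * v 0 := by
    refine sub_eq_zero.mp ((mul_eq_zero.mp ?_).resolve_left ofReal_sqrt_three_ne_zero)
    linear_combination 2 * h0
  refine ⟨v 0, ?_⟩
  ext i
  fin_cases i <;> simp [hv1, mul_comm]

lemma mulVec_eq_conj_mul_smul_of_eigenvectors {H n : Type*} [SMul ℂ H] [Fintype n] (M : Matrix n n ℂ)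
    (U : H → H) (F : H → H → n → ℂ)
    (hFsmul₁ : ∀ (a : ℂ) (Ψ Φ : H), F (a • Ψ) Φ = (starRingEnd ℂ) a • F Ψ Φ)
    (hFsmul₂ : ∀ (a : ℂ) (Ψ Φ : H), F Ψ (a • Φ) = a • F Ψ Φ)
    (hFU : ∀ Ψ Φ : H, F (U Ψ) (U Φ) = M *ᵥ F Ψ Φ)
    {j k : ℂ} {Ψj Ψk : H} (hΨj : U Ψj = j • Ψj) (hΨk : U Ψk = k • Ψk) :
    M *ᵥ F Ψj Ψk = ((starRingEnd ℂ) j * k) • F Ψj Ψk := by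
  rw [← hFU, hΨj, hΨk, hFsmul₁, hFsmul₂, smul_smul]

theorem sesquilinear_form_directions_general
    {H : Type*} [NormedAddCommGroup H] [InnerProductSpace ℂ H]
    (U : H →ₗᵢ[ℂ] H)
    (F : H → H → Fin 2 → ℂ)
    (hFsmul₁ : ∀ (a : ℂ) (Ψ Φ : H), F (a • Ψ) Φ = (starRingEnd ℂ) a • F Ψ Φ)
    (hFsmul₂ : ∀ (a : ℂ) (Ψ Φ : H), F Ψ (a • Φ) = a • F Ψ Φ)
    (hFU : ∀ Ψ Φ : H, F (U Ψ) (U Φ) = Rc.mulVec (F Ψ Φ))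
    (j k : ℂ) (hj : j ∈ ({1, τ, τb} : Set ℂ))
    (Ψj Ψk : H) (hΨj : U Ψj = j • Ψj) (hΨk : U Ψk = k • Ψk) :
    (j = k → F Ψj Ψk = 0) ∧
    (((j, k) = (1, τ) ∨ (j, k) = (τ, τb) ∨ (j, k) = (τb, 1)) →
      ∃ c : ℂ, F Ψj Ψk = c • ![1, Complex.I]) ∧
    (((j, k) = (τ, 1) ∨ (j, k) = (τb, τ) ∨ (j, k) = (1, τb)) →
      ∃ c : ℂ, F Ψj Ψk = c • ![1, -Complex.I]) := by
  have hRF := mulVec_eq_conj_mul_smul_of_eigenvectors Rc U F hFsmul₁ hFsmul₂ hFU hΨj hΨk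
  refine ⟨?_, ?_, ?_⟩
  · rintro rfl
    rw [conj_mul_self_of_mem hj, one_smul] at hRF
    exact eq_zero_of_mulVec_Rc_eq_self hRF
  · rintro (h | h | h) <;> obtain ⟨rfl, rfl⟩ := Prod.mk.inj h <;>
      refine exists_smul_of_mulVec_Rc_eq_τ_smul ?_ <;>
      simpa only [map_one, one_mul, mul_one, conj_τ, conj_τb, τb_mul_τb] using hRF
  · rintro (h | h | h) <;> obtain ⟨rfl, rfl⟩ := Prod.mk.inj h <;>
      refine exists_smul_of_mulVec_Rc_eq_τb_smul ?_ <;>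
      simpa only [map_one, one_mul, mul_one, conj_τ, conj_τb, τ_mul_τ] using hRF

/-- For a sesquilinear `ℂ²`-valued form `ℱ` equivariant under a cube-root-of-identity
unitary `𝔎` via the rotation `R`, the value `ℱ(Ψⱼ, Ψₖ)` on eigenvectors vanishes when
`j = k`, is a multiple of `(1, i)ᵀ` for `(j,k) ∈ {(1,τ), (τ,τ̄), (τ̄,1)}`, and a multiple
of `(1, -i)ᵀ` for `(j,k) ∈ {(τ,1), (τ̄,τ), (1,τ̄)}`. -/
theorem sesquilinear_form_directions
    {H : Type*} [NormedAddCommGroup H] [InnerProductSpace ℂ H]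
    (U : H →ₗᵢ[ℂ] H) (hU3 : ∀ x, U (U (U x)) = x)
    (F : H → H → Fin 2 → ℂ)
    (hFsmul₁ : ∀ (a : ℂ) (Ψ Φ : H), F (a • Ψ) Φ = (starRingEnd ℂ) a • F Ψ Φ)
    (hFsmul₂ : ∀ (a : ℂ) (Ψ Φ : H), F Ψ (a • Φ) = a • F Ψ Φ)
    (hFadd₁ : ∀ (Ψ Ψ' Φ : H), F (Ψ + Ψ') Φ = F Ψ Φ + F Ψ' Φ)
    (hFadd₂ : ∀ (Ψ Φ Φ' : H), F Ψ (Φ + Φ') = F Ψ Φ + F Ψ Φ')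
    (hFU : ∀ Ψ Φ : H, F (U Ψ) (U Φ) = Rc.mulVec (F Ψ Φ))
    (j k : ℂ) (hj : j ∈ ({1, τ, τb} : Set ℂ)) (hk : k ∈ ({1, τ, τb} : Set ℂ))
    (Ψj Ψk : H) (hΨj : U Ψj = j • Ψj) (hΨk : U Ψk = k • Ψk) :
    (j = k → F Ψj Ψk = 0) ∧
    (((j, k) = (1, τ) ∨ (j, k) = (τ, τb) ∨ (j, k) = (τb, 1)) →
      ∃ c : ℂ, F Ψj Ψk = c • ![1, Complex.I]) ∧
    (((j, k) = (τ, 1) ∨ (j, k) = (τb, τ) ∨ (j, k) = (1, τb)) →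
      ∃ c : ℂ, F Ψj Ψk = c • ![1, -Complex.I]) :=
  sesquilinear_form_directions_general U F hFsmul₁ hFsmul₂ hFU j k hj Ψj Ψk hΨj hΨk
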